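/- arXiv:1404.5780 — 2 statements merged into one kernel-verified Lean document; each statement's English description precedes it below -/
import Mathlib

section
/- Let D be a digraph of order n ≥ 6 with minimum out-degree and minimum in-degree both at least two, satisfying condition (*). Let C := x_1x_2…x_{n-1}x_1 be a cycle of length n−1 in D (subscripts modulo n−1), and let y be the vertex not on C. If for some i ∈ [1,n−1] the arc x_iy is in D and the vertices x_{i+1} and y are non-adjacent, then D contains a Hamiltonian bypass. -/
/-!
If two consecutive vertices of `C` are both in-neighbours of `y`, open the cycle between them
and append `y`; dually for two consecutive out-neighbours. Otherwise the in- and out-neighbours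
of `y` on `C` contain no two consecutive vertices, so `d(y) ≤ n - 1`. Condition (*) for the
non-adjacent pair `x_{i+1}, y` (common in-neighbour `x_i`) then forces `d(y) = n - 1`, so every
other vertex of `C` is an in-neighbour of `y`, in particular `x_{i+2}`, and `d(x_{i+1}) ≥ n`.
The latter yields `a ≠ i` with `x_a → x_{i+1} → x_{a+1}`; inserting `x_{i+1}` there into the
path `x_{i+2} … x_i` and appending `y` gives a bypass whose reversed arc is `x_{i+2} y`.
-/

open Finset

variable {V : Type*}

/-- Out-degree of a vertex. -/
def outDeg [Fintype V] (A : V → V → Prop) [DecidableRel A] (v : V) : ℕ :=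
  (Finset.univ.filter (fun u => A v u)).card

/-- In-degree of a vertex. -/
def inDeg [Fintype V] (A : V → V → Prop) [DecidableRel A] (v : V) : ℕ :=
  (Finset.univ.filter (fun u => A u v)).card

/-- Degree of a vertex: out-degree plus in-degree. -/
def deg [Fintype V] (A : V → V → Prop) [DecidableRel A] (v : V) : ℕ :=
  outDeg A v + inDeg A v

/-- Two vertices are adjacent if there is an arc between them in some direction. -/
def Adj (A : V → V → Prop) (u v : V) : Prop := A u v ∨ A v u

/-- Condition (*): for every pair of non-adjacent vertices with a common in-neighbour,
`min {d(x), d(y)} ≥ n - 1` and `d(x) + d(y) ≥ 2n - 1`. -/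
def CondStar [Fintype V] (A : V → V → Prop) [DecidableRel A] : Prop :=
  ∀ x y : V, x ≠ y → ¬ Adj A x y → (∃ z : V, A z x ∧ A z y) →
    min (deg A x) (deg A y) ≥ Fintype.card V - 1 ∧
    deg A x + deg A y ≥ 2 * Fintype.card V - 1

/-- A Hamiltonian bypass: an ordering `x₁, …, xₙ` of all vertices such that
`x₁x₂, …, x_{n-1}xₙ` and `x₁xₙ` are all arcs. -/
def HamBypass (A : V → V → Prop) : Prop :=
  ∃ l : List V, l.Nodup ∧ (∀ v : V, v ∈ l) ∧ l.Chain' A ∧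
    ∃ a b : V, l.head? = some a ∧ l.getLast? = some b ∧ A a b

section Bypass

variable (A : V → V → Prop)

theorem hamBypass_of_seq [Fintype V] (N : ℕ) (f : ℕ → V) (hinj : Set.InjOn f (Set.Iic N))
    (hsurj : ∀ v, ∃ t ≤ N, f t = v) (hpath : ∀ t < N, A (f t) (f (t + 1)))
    (hbypass : A (f 0) (f N)) : HamBypass A := by
  refine ⟨(List.range (N + 1)).map f, ?_, ?_, ?_, f 0, f N, ?_, ?_, hbypass⟩
  · exact List.Nodup.map_on (fun s hs t ht => hinj (by simpa [Nat.lt_succ_iff] using hs)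
      (by simpa [Nat.lt_succ_iff] using ht)) List.nodup_range
  · intro v
    obtain ⟨t, ht, rfl⟩ := hsurj v
    exact List.mem_map_of_mem (List.mem_range.2 (Nat.lt_succ_of_le ht))
  · exact List.isChain_map f |>.2 <| (List.isChain_range_succ _ N).2 hpath
  · simp [List.range_succ_eq_map]
  · simp [List.range_succ]

theorem HamBypass.of_flip (h : HamBypass (flip A)) : HamBypass A := by
  obtain ⟨l, hnd, hmem, hch, a, b, ha, hb, hab⟩ := h
  refine ⟨l.reverse, List.nodup_reverse.2 hnd, by simpa using hmem, ?_, b, a, ?_, ?_, hab⟩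
  · exact List.isChain_reverse.2 hch
  · simpa [List.head?_reverse] using hb
  · simpa [List.getLast?_reverse] using ha

end Bypass

namespace ZMod

theorem natCast_injOn_Iio (m : ℕ) : Set.InjOn (Nat.cast : ℕ → ZMod m) (Set.Iio m) :=
  fun s hs t ht h => by rw [← ZMod.val_cast_of_lt hs, ← ZMod.val_cast_of_lt ht, h]

theorem natCast_sub_one (m : ℕ) [NeZero m] : ((m - 1 : ℕ) : ZMod m) = -1 := by
  rw [Nat.cast_sub NeZero.one_le, ZMod.natCast_self, Nat.cast_one, zero_sub]

end ZMod

section Cycle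

variable {m : ℕ} [NeZero m] (A : V → V → Prop) {x : ZMod m → V} {y : V}

theorem exists_eq_of_ne_of_card_eq [Fintype V] (hinj : Function.Injective x)
    (hy : ∀ j, y ≠ x j) (hcard : Fintype.card V = m + 1) (v : V) (hv : v ≠ y) :
    ∃ j, x j = v := by
  have hy' : y ∉ univ.map ⟨x, hinj⟩ := by simpa using fun j => (hy j).symm
  have huniv : (univ.map ⟨x, hinj⟩).cons y hy' = univ :=
    eq_univ_of_card _ (by rw [card_cons, card_map, card_univ, ZMod.card, hcard])
  have hmem : v ∈ (univ.map ⟨x, hinj⟩).cons y hy' := huniv ▸ mem_univ v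
  simpa [hv] using hmem

theorem hamBypass_of_path_through_cycle [Fintype V] (hinj : Function.Injective x)
    (hcover : ∀ v, v ≠ y → ∃ j, x j = v) (hy : ∀ j, y ≠ x j)
    (g : ℕ → ZMod m) (hg : Set.InjOn g (Set.Iio m))
    (hpath : ∀ t, t + 1 < m → A (x (g t)) (x (g (t + 1))))
    (hfirst : A (x (g 0)) y) (hlast : A (x (g (m - 1))) y) : HamBypass A := by
  classical
  have hm := NeZero.pos m
  have hgsurj : ∀ j, ∃ t < m, g t = j := by
    have himage : (range m).image g = univ :=
      eq_univ_of_card _ (by rw [card_image_of_injOn (by simpa using hg), card_range, ZMod.card])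
    intro j
    have hmem : j ∈ (range m).image g := himage ▸ mem_univ j
    simpa using hmem
  refine hamBypass_of_seq A m (fun t => if t < m then x (g t) else y) ?_ ?_ ?_ ?_
  · intro s hs t ht hst
    simp only [Set.mem_Iic] at hs ht
    by_cases hsm : s < m <;> by_cases htm : t < m <;> simp only [hsm, htm, if_true, if_false] at hst
    · exact hg hsm htm (hinj hst)
    · exact absurd hst.symm (hy _)
    · exact absurd hst (hy _)
    · omega
  · intro v
    by_cases hv : v = y
    · exact ⟨m, le_rfl, by simp [hv]⟩
    · obtain ⟨j, rfl⟩ := hcover v hv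
      obtain ⟨t, ht, rfl⟩ := hgsurj j
      exact ⟨t, ht.le, by simp [ht]⟩
  · intro t ht
    by_cases ht1 : t + 1 < m
    · simpa [ht, ht1] using hpath t ht1
    · obtain rfl : t = m - 1 := by omega
      simpa [ht, Nat.sub_add_cancel hm] using hlast
  · simpa [hm] using hfirst

theorem hamBypass_of_consecutive_in_neighbours [Fintype V] (hinj : Function.Injective x)
    (hcover : ∀ v, v ≠ y → ∃ j, x j = v) (hy : ∀ j, y ≠ x j)
    (hcyc : ∀ j, A (x j) (x (j + 1))) (j : ZMod m) (hj : A (x j) y) (hj1 : A (x (j + 1)) y) :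
    HamBypass A := by
  refine hamBypass_of_path_through_cycle A hinj hcover hy (fun t => j + 1 + t)
    (fun s hs t ht h => ZMod.natCast_injOn_Iio m hs ht (add_left_cancel h)) ?_ ?_ ?_
  · intro t _
    simpa [add_assoc] using hcyc (j + 1 + t)
  · simpa using hj1
  · simpa [ZMod.natCast_sub_one] using hj

theorem hamBypass_of_consecutive_out_neighbours [Fintype V] (hinj : Function.Injective x)
    (hcover : ∀ v, v ≠ y → ∃ j, x j = v) (hy : ∀ j, y ≠ x j)
    (hcyc : ∀ j, A (x j) (x (j + 1))) (j : ZMod m) (hj : A y (x j)) (hj1 : A y (x (j + 1))) :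
    HamBypass A := by
  refine HamBypass.of_flip A <|
    hamBypass_of_consecutive_in_neighbours (flip A) (x := fun t => x (-t))
      (hinj.comp neg_injective) ?_ (fun t => hy (-t)) ?_ (-(j + 1)) (by simpa [flip] using hj1)
      (by simpa [flip] using hj)
  · intro v hv
    obtain ⟨t, rfl⟩ := hcover v hv
    exact ⟨-t, by simp⟩
  · intro t
    simpa [flip, neg_add_rev, add_comm] using hcyc (-(t + 1))

theorem hamBypass_of_insertion [Fintype V] (hinj : Function.Injective x)
    (hcover : ∀ v, v ≠ y → ∃ j, x j = v) (hy : ∀ j, y ≠ x j)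
    (hcyc : ∀ j, A (x j) (x (j + 1))) (i a : ZMod m) (hai : a ≠ i) (hai1 : a ≠ i + 1)
    (hxa : A (x a) (x (i + 1))) (hxa1 : A (x (i + 1)) (x (a + 1)))
    (hi : A (x i) y) (hi2 : A (x (i + 2)) y) : HamBypass A := by
  set k := (a - (i + 2)).val
  have hka : a = i + 2 + k := by simp [k]
  have hk1 : k + 1 ≠ m := by
    intro h
    have h' : ((k + 1 : ℕ) : ZMod m) = 0 := h ▸ ZMod.natCast_self m
    push_cast at h'
    exact hai1 (by rw [hka]; linear_combination h')
  have hk2 : k + 2 ≠ m := by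
    intro h
    have h' : ((k + 2 : ℕ) : ZMod m) = 0 := h ▸ ZMod.natCast_self m
    push_cast at h'
    exact hai (by rw [hka]; linear_combination h')
  have hkm : k < m := ZMod.val_lt _
  rw [hka] at hxa hxa1
  -- visit `x (i + 2), …, x a, x (i + 1), x (a + 1), …, x i`, offsets counted from `i + 1`
  set e : ℕ → ℕ := fun t => if t ≤ k then t + 1 else if t = k + 1 then 0 else t with he_def
  have he : ∀ t < m, e t < m := by
    intro t ht
    simp only [he_def]
    split_ifs <;> omega
  refine hamBypass_of_path_through_cycle A hinj hcover hy (fun t => i + 1 + e t) ?_ ?_ ?_ ?_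
  · intro s hs t ht h
    have hst := ZMod.natCast_injOn_Iio m (he s hs) (he t ht) (add_left_cancel h)
    simp only [he_def] at hst
    split_ifs at hst <;> omega
  · intro t ht
    show A (x (i + 1 + (e t : ℕ))) (x (i + 1 + (e (t + 1) : ℕ)))
    rcases lt_trichotomy t k with htk | rfl | htk
    · obtain ⟨h₀, h₁⟩ : e t = t + 1 ∧ e (t + 1) = t + 2 := by
        simp only [he_def]; split_ifs <;> omega
      rw [h₀, h₁]
      convert hcyc (i + 1 + (t + 1 : ℕ)) using 2
      push_cast; ring
    · obtain ⟨h₀, h₁⟩ : e k = k + 1 ∧ e (k + 1) = 0 := by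
        simp only [he_def]; split_ifs <;> omega
      rw [h₀, h₁]
      convert hxa using 2 <;> push_cast <;> ring
    rcases (Nat.succ_le_of_lt htk).eq_or_lt with rfl | htk
    · obtain ⟨h₀, h₁⟩ : e (k + 1) = 0 ∧ e (k + 1 + 1) = k + 2 := by
        simp only [he_def]; split_ifs <;> omega
      rw [h₀, h₁]
      convert hxa1 using 2 <;> push_cast <;> ring
    · obtain ⟨h₀, h₁⟩ : e t = t ∧ e (t + 1) = t + 1 := by
        simp only [he_def]; split_ifs <;> omega
      rw [h₀, h₁]
      convert hcyc (i + 1 + t) using 2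
      push_cast; ring
  · have h₀ : e 0 = 1 := by simp [he_def]
    convert hi2 using 2
    simp only [h₀]; push_cast; ring
  · have h₀ : e (m - 1) = m - 1 := by simp only [he_def]; split_ifs <;> omega
    simpa [h₀, ZMod.natCast_sub_one] using hi

end Cycle

section Counting

variable {m : ℕ}

theorem card_union_map_add_one {S : Finset (ZMod m)} (hS : ∀ j ∈ S, j + 1 ∉ S) :
    #(S ∪ S.map (addRightEmbedding 1)) = 2 * #S := by
  rw [card_union_of_disjoint, card_map, two_mul]
  exact disjoint_left.2 fun j hj hj' => by
    obtain ⟨a, ha, rfl⟩ := mem_map.1 hj'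
    exact hS a ha hj

variable [NeZero m]

theorem two_mul_card_le_of_forall_add_one_notMem {S : Finset (ZMod m)}
    (hS : ∀ j ∈ S, j + 1 ∉ S) : 2 * #S ≤ m := by
  simpa [card_union_map_add_one hS] using card_le_univ (S ∪ S.map (addRightEmbedding 1))

theorem add_one_mem_of_forall_add_one_notMem {S : Finset (ZMod m)} (hS : ∀ j ∈ S, j + 1 ∉ S)
    (hcard : m ≤ 2 * #S) {j : ZMod m} (hj : j ∉ S) : j + 1 ∈ S := by
  have hcard' : 2 * #S = m := le_antisymm (two_mul_card_le_of_forall_add_one_notMem hS) hcard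
  have huniv : S ∪ S.map (addRightEmbedding 1) = univ :=
    eq_univ_of_card _ (by rw [card_union_map_add_one hS, ZMod.card, hcard'])
  have hmem : j + 1 ∈ S ∪ S.map (addRightEmbedding 1) := huniv ▸ mem_univ _
  simpa [hj] using hmem

variable [Fintype V] {x : ZMod m → V} {y : V}

theorem card_filter_eq_card_filter_comp (hinj : Function.Injective x)
    (hcover : ∀ v, v ≠ y → ∃ j, x j = v) (p : V → Prop) [DecidablePred p] (hpy : ¬ p y) :
    #{v | p v} = #{j | p (x j)} := by
  refine (card_nbij x (fun j hj => by simpa using hj) hinj.injOn fun v hv => ?_).symm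
  obtain ⟨j, rfl⟩ := hcover v (by rintro rfl; exact hpy (by simpa using hv))
  exact ⟨j, by simpa using hv, rfl⟩

variable (A : V → V → Prop) [DecidableRel A]

theorem deg_eq_card_add_card (hyy : ¬ A y y) (hinj : Function.Injective x)
    (hcover : ∀ v, v ≠ y → ∃ j, x j = v) :
    deg A y = #{j | A y (x j)} + #{j | A (x j) y} := by
  rw [deg, outDeg, inDeg, card_filter_eq_card_filter_comp hinj hcover _ hyy,
    card_filter_eq_card_filter_comp hinj hcover (fun u => A u y) hyy]

theorem deg_le_of_forall_not_consecutive (hyy : ¬ A y y) (hinj : Function.Injective x)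
    (hcover : ∀ v, v ≠ y → ∃ j, x j = v) (hin : ∀ j, A (x j) y → ¬ A (x (j + 1)) y)
    (hout : ∀ j, A y (x j) → ¬ A y (x (j + 1))) : deg A y ≤ m := by
  have hO := two_mul_card_le_of_forall_add_one_notMem (S := {j | A y (x j)}) (by simpa using hout)
  have hI := two_mul_card_le_of_forall_add_one_notMem (S := {j | A (x j) y}) (by simpa using hin)
  rw [deg_eq_card_add_card A hyy hinj hcover]
  omega

theorem add_one_in_neighbour_of_forall_not_consecutive (hyy : ¬ A y y)
    (hinj : Function.Injective x) (hcover : ∀ v, v ≠ y → ∃ j, x j = v)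
    (hin : ∀ j, A (x j) y → ¬ A (x (j + 1)) y) (hout : ∀ j, A y (x j) → ¬ A y (x (j + 1)))
    (hdeg : m ≤ deg A y) {j : ZMod m} (hj : ¬ A (x j) y) : A (x (j + 1)) y := by
  have hO := two_mul_card_le_of_forall_add_one_notMem (S := {j | A y (x j)}) (by simpa using hout)
  rw [deg_eq_card_add_card A hyy hinj hcover] at hdeg
  simpa using add_one_mem_of_forall_add_one_notMem (S := {j | A (x j) y}) (by simpa using hin)
    (by omega) (by simpa using hj)

theorem deg_le_of_forall_not_insertion (hinj : Function.Injective x)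
    (hcover : ∀ v, v ≠ y → ∃ j, x j = v) (i : ZMod m) (hii : ¬ A (x (i + 1)) (x (i + 1)))
    (hiy : ¬ Adj A (x (i + 1)) y)
    (hno : ∀ a, a ≠ i → A (x a) (x (i + 1)) → ¬ A (x (i + 1)) (x (a + 1))) :
    deg A (x (i + 1)) ≤ m := by
  rw [deg, outDeg, inDeg, card_filter_eq_card_filter_comp hinj hcover _ fun h => hiy (Or.inl h),
    card_filter_eq_card_filter_comp hinj hcover (fun u => A u (x (i + 1))) fun h => hiy (Or.inr h)]
  set T : Finset (ZMod m) := {j | A (x (i + 1)) (x j)}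
  set S : Finset (ZMod m) := {j | A (x j) (x (i + 1))}
  have hdisj : Disjoint T (S.map (addRightEmbedding 1)) := by
    refine disjoint_right.2 fun b hb => ?_
    obtain ⟨a, ha, rfl⟩ := mem_map.1 hb
    simp only [S, T, mem_filter, mem_univ, true_and] at ha ⊢
    rcases eq_or_ne a i with rfl | hai
    · exact hii
    · exact hno a hai ha
  simpa [card_union_of_disjoint hdisj] using card_le_univ (T ∪ S.map (addRightEmbedding 1))

end Counting

theorem stmt8_general [Fintype V] (A : V → V → Prop) [DecidableRel A]
    (hloop : Irreflexive A)
    (n : ℕ) (hcard : Fintype.card V = n) (hn : 6 ≤ n)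
    (hstar : CondStar A)
    (x : ZMod (n - 1) → V) (hinj : Function.Injective x)
    (hcyc : ∀ i : ZMod (n - 1), A (x i) (x (i + 1)))
    (y : V) (hy : ∀ i : ZMod (n - 1), y ≠ x i)
    (i : ZMod (n - 1)) (h1 : A (x i) y) (h2 : ¬ Adj A (x (i + 1)) y) :
    HamBypass A := by
  have : NeZero (n - 1) := ⟨by omega⟩
  have hcover := exists_eq_of_ne_of_card_eq hinj hy (by omega : Fintype.card V = n - 1 + 1)
  by_cases hin : ∃ j, A (x j) y ∧ A (x (j + 1)) y
  · obtain ⟨j, hj, hj1⟩ := hin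
    exact hamBypass_of_consecutive_in_neighbours A hinj hcover hy hcyc j hj hj1
  by_cases hout : ∃ j, A y (x j) ∧ A y (x (j + 1))
  · obtain ⟨j, hj, hj1⟩ := hout
    exact hamBypass_of_consecutive_out_neighbours A hinj hcover hy hcyc j hj hj1
  push Not at hin hout
  obtain ⟨hmin, hsum⟩ := hstar (x (i + 1)) y (hy (i + 1)).symm h2 ⟨x i, hcyc i, h1⟩
  rw [hcard] at hmin hsum
  have hdy := deg_le_of_forall_not_consecutive A (hloop y) hinj hcover hin hout
  have hi2 : A (x (i + 2)) y := by
    simpa [add_assoc, one_add_one_eq_two] using add_one_in_neighbour_of_forall_not_consecutive A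
      (hloop y) hinj hcover hin hout (by omega) (j := i + 1) fun h => h2 (Or.inl h)
  obtain ⟨a, hai, hxa, hxa1⟩ :
      ∃ a, a ≠ i ∧ A (x a) (x (i + 1)) ∧ A (x (i + 1)) (x (a + 1)) := by
    by_contra! hno
    have := deg_le_of_forall_not_insertion A hinj hcover i (hloop _) h2 hno
    omega
  exact hamBypass_of_insertion A hinj hcover hy hcyc i a hai (fun h => hloop _ (h ▸ hxa)) hxa hxa1
    h1 hi2

theorem stmt8 [Fintype V] [DecidableEq V] (A : V → V → Prop) [DecidableRel A]
    (hloop : Irreflexive A)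
    (n : ℕ) (hcard : Fintype.card V = n) (hn : 6 ≤ n)
    (hout : ∀ v : V, 2 ≤ outDeg A v) (hin : ∀ v : V, 2 ≤ inDeg A v)
    (hstar : CondStar A)
    (x : ZMod (n - 1) → V) (hinj : Function.Injective x)
    (hcyc : ∀ i : ZMod (n - 1), A (x i) (x (i + 1)))
    (y : V) (hy : ∀ i : ZMod (n - 1), y ≠ x i)
    (i : ZMod (n - 1)) (h1 : A (x i) y) (h2 : ¬ Adj A (x (i + 1)) y) :
    HamBypass A :=
  stmt8_general A hloop n hcard hn hstar x hinj hcyc y hy i h1 h2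
end

section
/- Let D be a digraph of order n ≥ 6 with minimum out-degree and minimum in-degree both at least two, satisfying condition (*). Let C := x_1x_2…x_{n-1}x_1 be a cycle of length n−1 in D (subscripts modulo n−1), and let y be the vertex not on C. If D contains no Hamiltonian bypass, then there exist two vertices x_k and x_l on C with {x_k,x_{k+1}} ∩ {x_l,x_{l+1}} = ∅ such that x_ky, yx_{k+1}, x_ly and yx_{l+1} are all arcs of D. -/
open Finset

variable {V : Type*}

/-!
If two consecutive vertices of `C` were both in-neighbours (or both out-neighbours) of `y`,
walking once around `C` and attaching `y` at the end (or the start) would give a Hamiltonian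
bypass. Hence the in- and out-neighbours of `y` each fill at most half of `C`, and
`d(y) ≤ n - 1`.
If no two disjoint insertion positions `x_k → y → x_{k+1}` existed, then, as `d⁻(y) ≥ 2`,
some in-neighbour `x_i` of `y` has `x_{i+1}` non-adjacent to `y`. Condition (*) then forces
`d(y) = n - 1`, so the in-neighbours of `y` are every other vertex of `C` (in particular
`x_{i+2} → y`), and `d(x_{i+1}) ≥ n`, which by pigeonhole gives `x_p → x_{i+1} → x_{p+1}`.
Moving `x_{i+1}` between `x_p` and `x_{p+1}` yields the bypass
`x_{i+2} … x_p x_{i+1} x_{p+1} … x_i y`.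
-/

def cyclePath {m : ℕ} (x : ZMod m → V) (a : ZMod m) (k : ℕ) : List V :=
  (List.range k).map fun t : ℕ => x (a + (t : ZMod m))

section cyclePath

variable {m : ℕ} {x : ZMod m → V} {a : ZMod m} {k l : ℕ}

@[simp] lemma cyclePath_zero : cyclePath x a 0 = [] := rfl

lemma cyclePath_succ : cyclePath x a (k + 1) = x a :: cyclePath x (a + 1) k := by
  simp only [cyclePath, List.range_succ_eq_map, List.map_cons, List.map_map, Nat.cast_zero,
    add_zero]
  congr 1
  refine List.map_congr_left fun t _ => ?_
  simp [add_assoc, add_comm (1 : ZMod m)]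

lemma cyclePath_add : cyclePath x a (k + l) = cyclePath x a k ++ cyclePath x (a + k) l := by
  simp only [cyclePath, List.range_add, List.map_append, List.map_map]
  congr 1
  refine List.map_congr_left fun t _ => ?_
  simp [add_assoc]

lemma head?_cyclePath_succ : (cyclePath x a (k + 1)).head? = some (x a) := by
  simp [cyclePath_succ]

lemma getLast?_cyclePath_succ : (cyclePath x a (k + 1)).getLast? = some (x (a + k)) := by
  rw [cyclePath_add, List.getLast?_append]
  simp [cyclePath_succ]

lemma isChain_cyclePath {A : V → V → Prop} (hx : ∀ i, A (x i) (x (i + 1))) :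
    ∀ {a : ZMod m} {k : ℕ}, (cyclePath x a k).IsChain A
  | _, 0 => .nil
  | a, k + 1 => by
    rw [cyclePath_succ]
    refine isChain_cyclePath hx |>.cons fun b hb => ?_
    cases k with
    | zero => simp at hb
    | succ k =>
      rw [head?_cyclePath_succ, Option.mem_some_iff] at hb
      exact hb ▸ hx a

lemma nodup_cyclePath (hx : Function.Injective x) : (cyclePath x a m).Nodup := by
  refine List.Nodup.map_on (fun s hs t ht hst => ?_) List.nodup_range
  have := congrArg ZMod.val (add_left_cancel (hx hst))
  rwa [ZMod.val_cast_of_lt (List.mem_range.mp hs), ZMod.val_cast_of_lt (List.mem_range.mp ht)]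
    at this

variable [NeZero m]

lemma head?_cyclePath_self : (cyclePath x a m).head? = some (x a) := by
  obtain ⟨k, rfl⟩ := Nat.exists_eq_add_one_of_ne_zero (NeZero.ne m)
  exact head?_cyclePath_succ

lemma getLast?_cyclePath_self : (cyclePath x (a + 1) m).getLast? = some (x a) := by
  obtain ⟨k, rfl⟩ := Nat.exists_eq_add_one_of_ne_zero (NeZero.ne m)
  rw [getLast?_cyclePath_succ, add_assoc, add_comm (1 : ZMod _), ← Nat.cast_add_one,
    ZMod.natCast_self, add_zero]

lemma mem_cyclePath (i : ZMod m) : x i ∈ cyclePath x a m :=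
  List.mem_map.mpr ⟨(i - a).val, List.mem_range.mpr (ZMod.val_lt _), by simp⟩

end cyclePath

lemma ZMod.exists_eq_add_two_add_of_ne {m : ℕ} [NeZero m] {i p : ZMod m} (h₀ : p ≠ i)
    (h₁ : p ≠ i + 1) : ∃ s r : ℕ, s + r + 3 = m ∧ p = i + 2 + s := by
  set s := (p - (i + 2)).val
  have hp : p = i + 2 + s := by simp [s]
  have hs : ∀ k : ℕ, s + k = m → p = i + 2 - k := fun k hk => by
    have := congrArg (Nat.cast : ℕ → ZMod m) hk
    rw [ZMod.natCast_self] at this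
    push_cast at this
    rw [hp]
    linear_combination this
  refine ⟨s, m - 3 - s, ?_, hp⟩
  have := ZMod.val_lt (p - (i + 2))
  by_contra h
  obtain h | h : s + 1 = m ∨ s + 2 = m := by omega
  · exact h₁ (by rw [hs 1 h]; ring)
  · exact h₀ (by rw [hs 2 h]; ring)

section AddGroup

variable {G : Type*} [AddGroup G] [DecidableEq G] {S : Finset G} {g : G}

lemma Finset.card_union_image_add_right (h : ∀ i ∈ S, i + g ∉ S) :
    #(S ∪ S.image (· + g)) = 2 * #S := by
  rw [card_union_of_disjoint, card_image_of_injective _ (add_left_injective g), two_mul]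
  simp only [disjoint_left, mem_image, not_exists, not_and]
  exact fun i hi j hj hji => h j hj (hji ▸ hi)

lemma Finset.two_mul_card_le_of_add_notMem [Fintype G] (h : ∀ i ∈ S, i + g ∉ S) :
    2 * #S ≤ Fintype.card G :=
  card_union_image_add_right h ▸ card_le_univ _

lemma Finset.add_add_mem_of_two_mul_card_eq [Fintype G] (h : ∀ i ∈ S, i + g ∉ S)
    (hS : 2 * #S = Fintype.card G) {i : G} (hi : i ∈ S) : i + g + g ∈ S := by
  have huniv : S ∪ S.image (· + g) = univ :=
    eq_univ_of_card _ ((card_union_image_add_right h).trans hS)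
  obtain h' | h' := mem_union.mp (huniv ▸ mem_univ (i + g + g))
  · exact h'
  · obtain ⟨j, hj, hji⟩ := mem_image.mp h'
    exact absurd (add_right_cancel hji ▸ hj) (h i hi)

end AddGroup

structure IsCycleOmitting (A : V → V → Prop) {m : ℕ} (x : ZMod m → V) (y : V) : Prop where
  injective : Function.Injective x
  isArc : ∀ i, A (x i) (x (i + 1))
  ne : ∀ i, y ≠ x i
  eq_or_exists : ∀ v, v = y ∨ ∃ i, x i = v

namespace IsCycleOmitting

variable {A : V → V → Prop} {m : ℕ} {x : ZMod m → V} {y : V}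

lemma of_card [Fintype V] [NeZero m] (hcard : Fintype.card V = m + 1)
    (hx : Function.Injective x) (hA : ∀ i, A (x i) (x (i + 1))) (hy : ∀ i, y ≠ x i) :
    IsCycleOmitting A x y := by
  classical
  refine ⟨hx, hA, hy, fun v => ?_⟩
  have hyx : y ∉ univ.image x := by simpa using fun i => (hy i).symm
  have huniv : insert y (univ.image x) = univ := by
    apply eq_univ_of_card
    rw [card_insert_of_notMem hyx, card_image_of_injective _ hx, card_univ, ZMod.card, hcard]
  have hv : v ∈ insert y (univ.image x) := huniv ▸ mem_univ v
  simpa [eq_comm] using hv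

variable (hC : IsCycleOmitting A x y)
include hC

lemma card_filter_eq [Fintype V] [NeZero m] {P : V → Prop} [DecidablePred P] (hy : ¬ P y) :
    #{v | P v} = #{i | P (x i)} := by
  refine (card_nbij x (fun i hi => by simpa using hi) hC.injective.injOn fun v hv => ?_).symm
  obtain rfl | ⟨i, rfl⟩ := hC.eq_or_exists v
  · exact absurd (by simpa using hv) hy
  · exact ⟨i, by simpa using hv, rfl⟩

lemma inDeg_eq [Fintype V] [NeZero m] [DecidableRel A] {z : V} (hz : ¬ A y z) :
    inDeg A z = #{i | A (x i) z} :=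
  hC.card_filter_eq hz

lemma outDeg_eq [Fintype V] [NeZero m] [DecidableRel A] {z : V} (hz : ¬ A z y) :
    outDeg A z = #{i | A z (x i)} :=
  hC.card_filter_eq hz

variable [NeZero m]

lemma hamBypass_of_perm {l : List V} {a : ZMod m} {u w : V} (hl : l.Perm (y :: cyclePath x a m))
    (hchain : l.IsChain A) (hu : l.head? = some u) (hw : l.getLast? = some w) (huw : A u w) :
    HamBypass A := by
  refine ⟨l, hl.nodup_iff.mpr ?_, fun v => hl.mem_iff.mpr ?_, hchain, u, w, hu, hw, huw⟩
  · refine List.nodup_cons.mpr ⟨fun h => ?_, nodup_cyclePath hC.injective⟩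
    obtain ⟨t, -, ht⟩ := List.mem_map.mp h
    exact hC.ne _ ht.symm
  · obtain rfl | ⟨i, rfl⟩ := hC.eq_or_exists v
    · exact List.mem_cons_self
    · exact List.mem_cons_of_mem _ (mem_cyclePath i)

lemma not_arc_succ_to_of_arc_to (hnb : ¬ HamBypass A) {i : ZMod m} (hi : A (x i) y) :
    ¬ A (x (i + 1)) y := fun hi' => by
  refine hnb <| hC.hamBypass_of_perm (List.perm_append_singleton y _) ?_
    (by rw [List.head?_append, head?_cyclePath_self]; rfl) List.getLast?_concat hi'
  refine (isChain_cyclePath hC.isArc).append (List.isChain_singleton y) fun a ha b hb => ?_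
  rw [getLast?_cyclePath_self, Option.mem_some_iff] at ha
  rw [List.head?_cons, Option.mem_some_iff] at hb
  exact ha ▸ hb ▸ hi

lemma not_arc_from_succ_of_arc_from (hnb : ¬ HamBypass A) {i : ZMod m} (hi : A y (x i)) :
    ¬ A y (x (i + 1)) := fun hi' => by
  refine hnb <| hC.hamBypass_of_perm (List.Perm.refl _) ?_ rfl
    (by rw [List.getLast?_cons, getLast?_cyclePath_self]; rfl) hi
  refine (isChain_cyclePath hC.isArc).cons fun b hb => ?_
  rw [head?_cyclePath_self, Option.mem_some_iff] at hb
  exact hb ▸ hi'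

lemma two_mul_card_arc_to_le [DecidableRel A] (hnb : ¬ HamBypass A) :
    2 * #{i | A (x i) y} ≤ m :=
  (two_mul_card_le_of_add_notMem (S := {i | A (x i) y}) (g := 1) (by
    simpa using fun i => hC.not_arc_succ_to_of_arc_to hnb (i := i))).trans_eq (ZMod.card m)

lemma two_mul_card_arc_from_le [DecidableRel A] (hnb : ¬ HamBypass A) :
    2 * #{i | A y (x i)} ≤ m :=
  (two_mul_card_le_of_add_notMem (S := {i | A y (x i)}) (g := 1) (by
    simpa using fun i => hC.not_arc_from_succ_of_arc_from hnb (i := i))).trans_eq (ZMod.card m)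

lemma deg_le [Fintype V] [DecidableRel A] (hyy : ¬ A y y) (hnb : ¬ HamBypass A) :
    deg A y ≤ m := by
  have := hC.two_mul_card_arc_to_le hnb
  have := hC.two_mul_card_arc_from_le hnb
  rw [deg, hC.outDeg_eq hyy, hC.inDeg_eq hyy]
  omega

lemma arc_to_add_two [Fintype V] [DecidableRel A] (hyy : ¬ A y y) (hnb : ¬ HamBypass A)
    (hdeg : m ≤ deg A y) {i : ZMod m} (hi : A (x i) y) : A (x (i + 2)) y := by
  have hI := hC.two_mul_card_arc_to_le hnb
  have hO := hC.two_mul_card_arc_from_le hnb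
  rw [deg, hC.outDeg_eq hyy, hC.inDeg_eq hyy] at hdeg
  simpa [add_assoc, one_add_one_eq_two] using
    add_add_mem_of_two_mul_card_eq (S := {i | A (x i) y}) (g := 1)
      (by simpa using fun i => hC.not_arc_succ_to_of_arc_to hnb (i := i))
      (by rw [ZMod.card]; omega) (by simpa using hi)

lemma hamBypass_of_insert (hloop : ∀ v, ¬ A v v) {i p : ZMod m} (hi : A (x i) y)
    (hi2 : A (x (i + 2)) y) (hp : A (x p) (x (i + 1))) (hp' : A (x (i + 1)) (x (p + 1))) :
    HamBypass A := by
  obtain ⟨s, r, hm, rfl⟩ := ZMod.exists_eq_add_two_add_of_ne (i := i) (p := p)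
    (by rintro rfl; exact hloop _ hp') (by rintro rfl; exact hloop _ hp)
  rw [add_assoc, ← Nat.cast_add_one] at hp'
  set P := cyclePath x (i + 2) (s + 1)
  set Q := cyclePath x (i + 2 + (s + 1 : ℕ)) (r + 1)
  have hcycle : cyclePath x (i + 1) m = x (i + 1) :: (P ++ Q) := by
    have h : cyclePath x (i + 1) (s + 1 + (r + 1) + 1) = x (i + 1) :: (P ++ Q) := by
      rw [cyclePath_succ, cyclePath_add, add_assoc, one_add_one_eq_two]
    rwa [show s + 1 + (r + 1) + 1 = m by omega] at h
  have hQ : Q.getLast? = some (x i) := by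
    have hcast : ((s + r + 3 : ℕ) : ZMod m) = 0 := hm ▸ ZMod.natCast_self m
    rw [getLast?_cyclePath_succ]
    push_cast at hcast ⊢
    congr 2
    linear_combination hcast
  refine hC.hamBypass_of_perm (l := P ++ x (i + 1) :: Q ++ [y]) (a := i + 1) ?_ ?_
    (by simp [P, head?_cyclePath_succ]) List.getLast?_concat hi2
  · rw [hcycle]
    exact (List.perm_append_singleton _ _).trans (List.perm_middle.cons y)
  · have hP : P.IsChain A := isChain_cyclePath hC.isArc
    have hQ' : (x (i + 1) :: Q).IsChain A := (isChain_cyclePath hC.isArc).cons fun b hb => by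
      rw [head?_cyclePath_succ, Option.mem_some_iff] at hb
      exact hb ▸ hp'
    refine (hP.append hQ' fun a ha b hb => ?_).append (List.isChain_singleton y) fun a ha b hb => ?_
    · rw [getLast?_cyclePath_succ, Option.mem_some_iff] at ha
      rw [List.head?_cons, Option.mem_some_iff] at hb
      exact ha ▸ hb ▸ hp
    · rw [List.getLast?_append, List.getLast?_cons, hQ] at ha
      rw [List.head?_cons, Option.mem_some_iff] at hb
      simp only [Option.getD_some, Option.some_or, Option.mem_some_iff] at ha
      exact ha ▸ hb ▸ hi

lemma inter_eq_empty_of_arc_to (hnb : ¬ HamBypass A) {k l : ZMod m} (hk : A (x k) y)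
    (hl : A (x l) y) (hkl : k ≠ l) : ({x k, x (k + 1)} : Set V) ∩ {x l, x (l + 1)} = ∅ := by
  have h₁ : k ≠ l + 1 := by rintro rfl; exact hC.not_arc_succ_to_of_arc_to hnb hl hk
  have h₂ : k + 1 ≠ l := by rintro rfl; exact hC.not_arc_succ_to_of_arc_to hnb hk hl
  have h₃ : k + 1 ≠ l + 1 := fun h => hkl (add_right_cancel h)
  ext v
  simp only [Set.mem_inter_iff, Set.mem_insert_iff, Set.mem_singleton_iff, Set.mem_empty_iff_false,
    iff_false, not_and]
  rintro (rfl | rfl) <;> simp_all [hC.injective.eq_iff]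

lemma exists_arc_arc_succ [Fintype V] [DecidableRel A] {z : V} (hyz : ¬ Adj A y z)
    (hz : m + 1 ≤ deg A z) : ∃ p, A (x p) z ∧ A z (x (p + 1)) := by
  have hout : #{p | A z (x (p + 1))} = outDeg A z := by
    rw [hC.outDeg_eq fun h => hyz (.inr h)]
    exact card_equiv (Equiv.addRight 1) (by simp)
  have hin := hC.inDeg_eq fun h => hyz (.inl h)
  obtain ⟨p, hp⟩ := inter_nonempty_of_card_lt_card_add_card (subset_univ _) (subset_univ _)
    (s := univ) (t := {p | A (x p) z}) (u := {p | A z (x (p + 1))})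
    (by rw [card_univ, ZMod.card, hout, ← hin]; unfold deg at hz; omega)
  exact ⟨p, by simpa using hp⟩

end IsCycleOmitting

theorem stmt16_general [Fintype V] (A : V → V → Prop) [DecidableRel A]
    (hloop : Irreflexive A)
    (n : ℕ) (hcard : Fintype.card V = n)
    (hin : ∀ v : V, 2 ≤ inDeg A v)
    (hstar : CondStar A)
    (x : ZMod (n - 1) → V) (hinj : Function.Injective x)
    (hcyc : ∀ i : ZMod (n - 1), A (x i) (x (i + 1)))
    (y : V) (hy : ∀ i : ZMod (n - 1), y ≠ x i)
    (hnb : ¬ HamBypass A) :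
    ∃ k l : ZMod (n - 1),
      ({x k, x (k + 1)} : Set V) ∩ ({x l, x (l + 1)} : Set V) = ∅ ∧
      A (x k) y ∧ A y (x (k + 1)) ∧ A (x l) y ∧ A y (x (l + 1)) := by
  -- `ZMod 0 = ℤ` cannot inject into the finite type `V`.
  have : NeZero (n - 1) := ⟨fun h => by
    have hfin := Finite.of_injective x hinj
    rw [h] at hfin
    exact not_finite (ZMod 0)⟩
  have hn : 1 ≤ n := hcard ▸ Fintype.card_pos_iff.mpr ⟨y⟩
  have hC : IsCycleOmitting A x y := .of_card (by omega) hinj hcyc hy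
  by_contra hcon
  obtain ⟨i, hi, hi'⟩ : ∃ i, A (x i) y ∧ ¬ A y (x (i + 1)) := by
    obtain ⟨k, hk, l, hl, hkl⟩ := one_lt_card.mp (hC.inDeg_eq (hloop y) ▸ hin y)
    simp only [mem_filter, mem_univ, true_and] at hk hl
    by_contra! h
    exact hcon ⟨k, l, hC.inter_eq_empty_of_arc_to hnb hk hl hkl, hk, h k hk, hl, h l hl⟩
  have hnadj : ¬ Adj A y (x (i + 1)) := fun h => h.elim hi' (hC.not_arc_succ_to_of_arc_to hnb hi)
  obtain ⟨hmin, hsum⟩ := hstar y (x (i + 1)) (hy _) hnadj ⟨x i, hi, hcyc i⟩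
  have hdeg := hC.deg_le (hloop y) hnb
  have := min_le_left (deg A y) (deg A (x (i + 1)))
  rw [hcard] at hmin hsum
  obtain ⟨p, hp, hp'⟩ := hC.exists_arc_arc_succ hnadj (by omega)
  exact hnb (hC.hamBypass_of_insert hloop hi (hC.arc_to_add_two (hloop y) hnb (by omega) hi) hp hp')

theorem stmt16 [Fintype V] [DecidableEq V] (A : V → V → Prop) [DecidableRel A]
    (hloop : Irreflexive A)
    (n : ℕ) (hcard : Fintype.card V = n) (hn : 6 ≤ n)
    (hout : ∀ v : V, 2 ≤ outDeg A v) (hin : ∀ v : V, 2 ≤ inDeg A v)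
    (hstar : CondStar A)
    (x : ZMod (n - 1) → V) (hinj : Function.Injective x)
    (hcyc : ∀ i : ZMod (n - 1), A (x i) (x (i + 1)))
    (y : V) (hy : ∀ i : ZMod (n - 1), y ≠ x i)
    (hnb : ¬ HamBypass A) :
    ∃ k l : ZMod (n - 1),
      ({x k, x (k + 1)} : Set V) ∩ ({x l, x (l + 1)} : Set V) = ∅ ∧
      A (x k) y ∧ A y (x (k + 1)) ∧ A (x l) y ∧ A y (x (l + 1)) :=
  stmt16_general A hloop n hcard hin hstar x hinj hcyc y hy hnb
end
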